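/- Let λ_{n,b} = 2∫₀^∞ φ_n(bx) f(x) dx where φ_n(x) = ∫₀^π e^{-2x sin η} cos(2nη) dη, b > 0, and f ∈ C²((0,∞)) is nonnegative with: limsup_{x→0⁺} x|f(x)| and limsup_{x→0⁺} x²|f'(x)| finite, lim_{x→∞} f(x) = 0, lim_{x→∞} x f'(x) = 0, and f''(x) ≥ 0 for all x > 0. Then for every n ≥ 2, λ_{n+1,b} + λ_{n-1,b} - 2λ_{n,b} ≥ 0 (the spectrum is convex in n). -/

import Mathlib

/-!
Differentiating under the integral sign gives `φ_n'' = 2φ_n - φ_{n+1} - φ_{n-1}`, so the second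
difference of the spectrum is `-(2/b²) ∫₀^∞ f W''` with `W(x) = φ_n(bx) - c_n bx` and
`c_n = φ_n'(0) = 4/(4n² - 1)`. Integrating by parts twice turns this into `∫₀^∞ f'' W` plus boundary
terms. Since `W`, `W'` and `W''` vanish at `0` (the last one because `φ_{n-1}(0) = 0`, which needs
`n ≥ 2`), `W = o(x²)` and `W' = o(x)` there, and the growth conditions on `f` kill the boundary
terms at both ends. Finally `f'' ≥ 0` and `W ≤ 0`: the bound `φ_n(x) ≤ c_n x` is a maximum principle
for `x²φ'' + xφ' - 4(x² + n²)φ + 4x = 0`, since at a positive interior maximum of `φ_n(x) - c_n x`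
the equation forces `φ_n(x) ≤ c_n x`.
-/

open Real MeasureTheory Filter

/-- The universal function `φ_n`. -/
noncomputable def phi (n : ℕ) (x : ℝ) : ℝ :=
  ∫ η in (0:ℝ)..π, Real.exp (-2 * x * Real.sin η) * Real.cos (2 * n * η)

/-- The spectrum `λ_{n,b} = 2∫₀^∞ φ_n(bx) f(x) dx` for a measure with density `x f(x) dx/x`. -/
noncomputable def lamf (b : ℝ) (f : ℝ → ℝ) (n : ℕ) : ℝ :=
  2 * ∫ x in Set.Ioi (0:ℝ), phi n (b * x) * f x

open Set Topology Asymptotics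

noncomputable def expSinIntegral (P : ℝ → ℝ) (x : ℝ) : ℝ :=
  ∫ η in (0:ℝ)..π, exp (-2 * x * sin η) * P η

theorem hasDerivAt_expSinIntegral {P : ℝ → ℝ} (hP : Continuous P) (x₀ : ℝ) :
    HasDerivAt (expSinIntegral P) (expSinIntegral (fun η => -2 * sin η * P η) x₀) x₀ := by
  obtain ⟨M, hM⟩ : ∃ M, ∀ t ∈ uIcc 0 π, |P t| ≤ M :=
    (isCompact_uIcc.image_of_continuousOn hP.continuousOn).isBounded.exists_norm_le.imp
      fun M h t ht => h _ ⟨t, ht, rfl⟩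
  refine (intervalIntegral.hasDerivAt_integral_of_dominated_loc_of_deriv_le
    (F' := fun x t => exp (-2 * x * sin t) * (-2 * sin t * P t))
    (bound := fun _ => exp (2 * (|x₀| + 1)) * (2 * M))
    (Metric.ball_mem_nhds x₀ one_pos) (.of_forall fun x => by fun_prop)
    (by apply Continuous.intervalIntegrable; fun_prop) (by fun_prop) ?_ intervalIntegrable_const
    (.of_forall fun t _ x _ => ?_)).2
  · refine .of_forall fun t ht x hx => ?_
    have hx : |x| ≤ |x₀| + 1 := by
      have := abs_sub_abs_le_abs_sub x x₀
      linarith [mem_ball_iff_norm.mp hx, Real.norm_eq_abs (x - x₀)]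
    have hsin := abs_sin_le_one t
    have hexp : exp (-2 * x * sin t) ≤ exp (2 * (|x₀| + 1)) := by
      refine exp_le_exp.mpr ((le_abs_self _).trans ?_)
      rw [abs_mul, abs_mul, abs_neg, abs_two]
      nlinarith [abs_nonneg x, abs_nonneg (sin t)]
    have hPt : |-2 * sin t * P t| ≤ 2 * M := by
      rw [abs_mul, abs_mul, abs_neg, abs_two]
      nlinarith [hM t (uIoc_subset_uIcc ht), abs_nonneg (P t), abs_nonneg (sin t)]
    rw [norm_mul, Real.norm_eq_abs, abs_exp, Real.norm_eq_abs]
    exact mul_le_mul hexp hPt (abs_nonneg _) (exp_pos _).le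
  · exact ((hasDerivAt_id x |>.const_mul (-2) |>.mul_const (sin t)).exp.mul_const (P t)).congr_deriv
      (by simp only [id_eq, neg_mul, mul_one, mul_neg, neg_inj]; ring)

theorem expSinIntegral_linear_combination {P Q R : ℝ → ℝ} (hP : Continuous P) (hQ : Continuous Q)
    (hR : Continuous R) (a b c x : ℝ) :
    expSinIntegral (fun η => a * P η + b * Q η + c * R η) x =
      a * expSinIntegral P x + b * expSinIntegral Q x + c * expSinIntegral R x := by
  simp only [expSinIntegral, ← intervalIntegral.integral_const_mul]
  rw [← intervalIntegral.integral_add, ← intervalIntegral.integral_add]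
  · congr 1; ext η; ring
  all_goals apply Continuous.intervalIntegrable; fun_prop

theorem abs_expSinIntegral_le {P : ℝ → ℝ} {M x : ℝ} (hP : ∀ η, |P η| ≤ M) (hx : 0 ≤ x) :
    |expSinIntegral P x| ≤ M * π := by
  have := intervalIntegral.norm_integral_le_of_norm_le_const (a := 0) (b := π) (C := M)
    (f := fun η => exp (-2 * x * sin η) * P η) fun η hη => ?_
  · simpa [expSinIntegral, abs_of_nonneg pi_pos.le] using this
  rw [uIoc_of_le pi_pos.le] at hη
  have hexp : exp (-2 * x * sin η) ≤ 1 :=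
    exp_le_one_iff.mpr (by nlinarith [sin_nonneg_of_nonneg_of_le_pi hη.1.le hη.2])
  rw [norm_mul, Real.norm_eq_abs, abs_exp, Real.norm_eq_abs]
  nlinarith [abs_nonneg (P η), hP η, exp_pos (-2 * x * sin η)]

theorem phi_eq_expSinIntegral (n : ℕ) : phi n = expSinIntegral (fun η => cos (2 * n * η)) := rfl

noncomputable def phiD (n : ℕ) : ℝ → ℝ :=
  expSinIntegral (fun η => -2 * sin η * cos (2 * n * η))

noncomputable def phiDD (n : ℕ) : ℝ → ℝ :=
  expSinIntegral (fun η => -2 * sin η * (-2 * sin η * cos (2 * n * η)))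

theorem hasDerivAt_phi (n : ℕ) (x : ℝ) : HasDerivAt (phi n) (phiD n x) x :=
  hasDerivAt_expSinIntegral (by fun_prop) x

theorem hasDerivAt_phiD (n : ℕ) (x : ℝ) : HasDerivAt (phiD n) (phiDD n x) x :=
  hasDerivAt_expSinIntegral (by fun_prop) x

theorem continuous_phi (n : ℕ) : Continuous (phi n) :=
  continuous_iff_continuousAt.mpr fun x => (hasDerivAt_phi n x).continuousAt

theorem continuous_phiDD (n : ℕ) : Continuous (phiDD n) :=
  continuous_iff_continuousAt.mpr fun x =>
    (hasDerivAt_expSinIntegral (P := fun η => -2 * sin η * (-2 * sin η * cos (2 * n * η)))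
      (by fun_prop) x).continuousAt

theorem phi_zero {n : ℕ} (hn : n ≠ 0) : phi n 0 = 0 := by
  have h : (2 * n : ℝ) ≠ 0 := by positivity
  have := intervalIntegral.integral_comp_mul_left (a := 0) (b := π) cos h
  simp only [phi, mul_zero, zero_mul, exp_zero, one_mul, this, integral_cos, sin_zero]
  have h2 : (2:ℝ) * n * π = ((2 * n : ℕ) : ℝ) * π := by push_cast; ring
  simp [h2, sin_nat_mul_pi]

theorem phiD_zero {n : ℕ} (hn : n ≠ 0) : phiD n 0 = 4 / (4 * (n:ℝ)^2 - 1) := by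
  have hn1 : (1:ℝ) ≤ n := by exact_mod_cast Nat.one_le_iff_ne_zero.mpr hn
  have hp : (2 * n + 1 : ℝ) ≠ 0 := by positivity
  have hm : (2 * n - 1 : ℝ) ≠ 0 := by linarith
  have hsplit : ∀ η, exp (-2 * 0 * sin η) * (-2 * sin η * cos (2 * n * η)) =
      sin ((2 * n - 1) * η) - sin ((2 * n + 1) * η) := fun η => by
    rw [show (2 * n - 1) * η = 2 * n * η - η by ring, show (2 * n + 1) * η = 2 * n * η + η by ring,
      sin_sub, sin_add]
    simp only [mul_zero, zero_mul, exp_zero, one_mul]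
    ring
  have hcos : ∀ s : ℝ, cos ((2 * n + s) * π) = cos (s * π) := fun s => by
    rw [show (2 * n + s) * π = s * π + n * (2 * π) by ring, cos_add_nat_mul_two_pi]
  have hint : ∀ s : ℝ, s ≠ 0 → ∫ η in (0:ℝ)..π, sin (s * η) = s⁻¹ * (1 - cos (s * π)) := by
    intro s hs
    simp [intervalIntegral.integral_comp_mul_left (a := 0) (b := π) sin hs, integral_sin]
  rw [phiD, expSinIntegral, intervalIntegral.integral_congr fun η _ => hsplit η,
    intervalIntegral.integral_sub (by apply Continuous.intervalIntegrable; fun_prop)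
      (by apply Continuous.intervalIntegrable; fun_prop), hint _ hm, hint _ hp,
    sub_eq_add_neg (2 * (n:ℝ)), hcos, hcos]
  simp only [neg_mul, one_mul, cos_neg, cos_pi, ← sub_eq_add_neg]
  rw [show 4 * (n:ℝ)^2 - 1 = (2 * n - 1) * (2 * n + 1) by ring]
  field_simp
  ring

theorem phiDD_eq {n : ℕ} (hn : n ≠ 0) (x : ℝ) :
    phiDD n x = 2 * phi n x - phi (n + 1) x - phi (n - 1) x := by
  obtain ⟨m, rfl⟩ := Nat.exists_eq_succ_of_ne_zero hn
  have h : ∀ η : ℝ, -2 * sin η * (-2 * sin η * cos (2 * (m + 1 : ℕ) * η)) =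
      2 * cos (2 * (m + 1 : ℕ) * η) + -1 * cos (2 * (m + 2 : ℕ) * η) + -1 * cos (2 * m * η) := by
    intro η
    have e1 : 2 * ((m + 2 : ℕ) : ℝ) * η = 2 * (m + 1 : ℕ) * η + 2 * η := by push_cast; ring
    have e2 : 2 * (m : ℝ) * η = 2 * (m + 1 : ℕ) * η - 2 * η := by push_cast; ring
    rw [e1, e2, cos_add, cos_sub, cos_two_mul, sin_two_mul, cos_sq']
    ring
  rw [phiDD, funext h, expSinIntegral_linear_combination (by fun_prop) (by fun_prop) (by fun_prop)]
  simp only [phi_eq_expSinIntegral, Nat.succ_sub_one]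
  ring

theorem abs_phi_le (n : ℕ) {x : ℝ} (hx : 0 ≤ x) : |phi n x| ≤ π := by
  simpa [phi_eq_expSinIntegral] using abs_expSinIntegral_le (fun η => abs_cos_le_one (2 * n * η)) hx

theorem abs_phiD_le (n : ℕ) {x : ℝ} (hx : 0 ≤ x) : |phiD n x| ≤ 2 * π := by
  refine abs_expSinIntegral_le (fun η => ?_) hx
  rw [abs_mul, abs_mul, abs_neg, abs_two]
  nlinarith [abs_sin_le_one η, abs_cos_le_one (2 * n * η), abs_nonneg (sin η),
    abs_nonneg (cos (2 * n * η))]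

theorem phi_ode (n : ℕ) (x : ℝ) :
    4 * (x ^ 2 + n ^ 2) * phi n x - x * phiD n x - x ^ 2 * phiDD n x = 4 * x := by
  set F : ℝ → ℝ := fun η =>
    exp (-2 * x * sin η) * (-2 * x * cos η * cos (2 * n * η) + 2 * n * sin (2 * n * η))
  have hF : ∀ η ∈ uIcc 0 π, HasDerivAt F (exp (-2 * x * sin η) *
      (4 * (x ^ 2 + n ^ 2) * cos (2 * n * η) + -x * (-2 * sin η * cos (2 * n * η)) +
        -x ^ 2 * (-2 * sin η * (-2 * sin η * cos (2 * n * η))))) η := by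
    intro η _
    have hlin : HasDerivAt (fun η : ℝ => 2 * n * η) (2 * n) η := by
      simpa using (hasDerivAt_id η).const_mul (2 * (n : ℝ))
    have := ((hasDerivAt_sin η).const_mul (-2 * x)).exp.mul
      ((((hasDerivAt_cos η).const_mul (-2 * x)).mul ((hasDerivAt_cos _).comp η hlin)).add
        (((hasDerivAt_sin _).comp η hlin).const_mul (2 * (n : ℝ))))
    refine this.congr_deriv ?_
    simp only [Function.comp_apply, Pi.add_apply, Pi.mul_apply]
    linear_combination ((4 * x ^ 2) * exp (-2 * x * sin η) * cos (2 * n * η)) * sin_sq_add_cos_sq η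
  have hsin : sin (2 * n * π) = 0 := by
    rw [show (2 : ℝ) * n * π = ((2 * n : ℕ) : ℝ) * π by push_cast; ring, sin_nat_mul_pi]
  have hcos : cos (2 * n * π) = 1 := by
    rw [show (2 : ℝ) * n * π = n * (2 * π) by ring, cos_nat_mul_two_pi]
  have := intervalIntegral.integral_eq_sub_of_hasDerivAt hF
    (by apply Continuous.intervalIntegrable; fun_prop)
  rw [← expSinIntegral,
    expSinIntegral_linear_combination (by fun_prop) (by fun_prop) (by fun_prop)] at this
  simp only [F, sin_pi, cos_pi, sin_zero, cos_zero, hsin, hcos, mul_zero, exp_zero] at this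
  rw [phi_eq_expSinIntegral, phiD, phiDD]
  linear_combination this

theorem deriv_deriv_nonpos_of_isLocalMax {f : ℝ → ℝ} {z : ℝ} (hmax : IsLocalMax f z)
    (hc : ContinuousAt f z) : deriv (deriv f) z ≤ 0 := by
  by_contra! hpos
  have hmin := isLocalMin_of_deriv_deriv_pos hpos hmax.deriv_eq_zero hc
  have hconst : f =ᶠ[𝓝 z] fun _ => f z := by
    filter_upwards [hmax, hmin] with y h₁ h₂ using le_antisymm h₁ h₂
  simp [hconst.deriv.deriv_eq] at hpos

theorem nonpos_of_isLocalMax_nonpos {w : ℝ → ℝ} (hw : Continuous w) (h0 : w 0 ≤ 0)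
    (hinf : ∀ᶠ x in atTop, w x ≤ 0) (hmax : ∀ z > 0, IsLocalMax w z → w z ≤ 0)
    {x : ℝ} (hx : 0 ≤ x) : w x ≤ 0 := by
  by_contra! hwx
  have hcocompact : ∀ᶠ y in cocompact ℝ ⊓ 𝓟 (Ici 0), w y ≤ w x := by
    rw [cocompact_eq_atBot_atTop, inf_sup_right, eventually_sup, eventually_inf_principal,
      eventually_inf_principal]
    exact ⟨(eventually_lt_atBot 0).mono fun y hy hy' => absurd hy' (not_le.mpr hy),
      hinf.mono fun y hy _ => hy.trans hwx.le⟩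
  obtain ⟨z, hz, hzmax⟩ := hw.continuousOn.exists_isMaxOn' isClosed_Ici hx hcocompact
  have hwz : 0 < w z := hwx.trans_le (hzmax hx)
  have hz0 : 0 < z := lt_of_le_of_ne hz (by rintro rfl; linarith)
  exact (hmax z hz0 (hzmax.isLocalMax (Ici_mem_nhds hz0))).not_gt hwz

theorem phi_le {n : ℕ} (hn : n ≠ 0) {x : ℝ} (hx : 0 ≤ x) :
    phi n x ≤ 4 / (4 * (n:ℝ)^2 - 1) * x := by
  set c := 4 / (4 * (n:ℝ)^2 - 1) with hc
  have hn1 : (1:ℝ) ≤ n := by exact_mod_cast Nat.one_le_iff_ne_zero.mpr hn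
  have hden : 0 < 4 * (n:ℝ)^2 - 1 := by nlinarith
  have hcpos : 0 < c := div_pos four_pos hden
  have hc4 : 4 + c = 4 * n ^ 2 * c := by rw [hc]; field_simp; ring
  set w := fun y => phi n y - c * y
  have hw' : deriv w = fun y => phiD n y - c := funext fun y =>
    ((hasDerivAt_phi n y).sub ((hasDerivAt_id y).const_mul c)).deriv.trans (by simp)
  have hw'' : ∀ z, deriv (deriv w) z = phiDD n z := fun z => by
    rw [hw']; exact ((hasDerivAt_phiD n z).sub_const c).deriv
  have hwc : Continuous w := (continuous_phi n).sub (continuous_const_mul c)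
  suffices w x ≤ 0 by simpa [w, sub_nonpos] using this
  refine nonpos_of_isLocalMax_nonpos hwc (by simp [w, phi_zero hn]) ?_ ?_ hx
  · filter_upwards [eventually_ge_atTop 0, (tendsto_id.const_mul_atTop hcpos).eventually_ge_atTop π]
      with y hy hcy
    simp only [w]
    linarith [(abs_le.mp (abs_phi_le n hy)).2, show π ≤ c * y from hcy]
  · intro z hz hmax
    have hd : phiD n z = c := by
      have := hmax.deriv_eq_zero; rw [hw'] at this; linarith
    have hdd : phiDD n z ≤ 0 :=
      hw'' z ▸ deriv_deriv_nonpos_of_isLocalMax hmax hwc.continuousAt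
    have hode := phi_ode n z
    rw [hd] at hode
    have : 4 * (z ^ 2 + n ^ 2) * phi n z ≤ 4 * (z ^ 2 + n ^ 2) * (c * z) := by
      nlinarith [mul_nonneg (sq_nonneg z) (neg_nonneg.mpr hdd), mul_pos (pow_pos hz 3) hcpos]
    simp only [w, sub_nonpos]
    exact le_of_mul_le_mul_left this (by positivity)

theorem isLittleO_of_deriv_deriv_tendsto_zero {W W' W'' : ℝ → ℝ}
    (hW : ∀ x, HasDerivAt W (W' x) x) (hW' : ∀ x, HasDerivAt W' (W'' x) x)
    (hW'' : Tendsto W'' (𝓝 0) (𝓝 0)) (hW0 : W 0 = 0) (hW'0 : W' 0 = 0) :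
    W' =o[𝓝 0] (fun x => x) ∧ W =o[𝓝 0] (fun x => x ^ 2) := by
  have h0 : W'' =o[𝓝[univ] 0] fun x => (x - 0) ^ 0 := by
    simpa using (isLittleO_one_iff ℝ).mpr hW''
  have h1 := convex_univ.isLittleO_pow_succ_real (mem_univ 0)
    (fun x _ => (hW' x).hasDerivWithinAt) h0
  have h2 := convex_univ.isLittleO_pow_succ_real (mem_univ 0)
    (fun x _ => (hW x).hasDerivWithinAt) (n := 1) (by simpa [hW'0] using h1)
  simp only [nhdsWithin_univ, sub_zero, hW'0, hW0, zero_add, pow_one] at h1 h2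
  exact ⟨h1, h2⟩

theorem tendsto_mul_sub_mul_nhdsGT_zero {f g W W' : ℝ → ℝ} (hf : f =O[𝓝[>] 0] (·⁻¹))
    (hg : g =O[𝓝[>] 0] fun x => (x ^ 2)⁻¹) (hW : W =o[𝓝[>] 0] fun x => x ^ 2)
    (hW' : W' =o[𝓝[>] 0] fun x => x) :
    Tendsto (fun x => f x * W' x - g x * W x) (𝓝[>] 0) (𝓝 0) := by
  have hpos : ∀ᶠ x : ℝ in 𝓝[>] 0, x ≠ 0 := eventually_mem_nhdsWithin.mono fun x hx => ne_of_gt hx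
  have h1 := (hf.mul_isLittleO hW').congr' .rfl (hpos.mono fun x hx => inv_mul_cancel₀ hx)
  have h2 := (hg.mul_isLittleO hW).congr' .rfl
    (hpos.mono fun x hx => inv_mul_cancel₀ (pow_ne_zero 2 hx))
  exact (isLittleO_one_iff ℝ).mp (h1.sub h2)

theorem tendsto_mul_sub_mul_atTop {f g W W' : ℝ → ℝ} (hf : Tendsto f atTop (𝓝 0))
    (hg : Tendsto (fun x => x * g x) atTop (𝓝 0)) (hW : W =O[atTop] fun x => x)
    (hW' : W' =O[atTop] fun _ => (1:ℝ)) :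
    Tendsto (fun x => f x * W' x - g x * W x) atTop (𝓝 0) := by
  have hpos : ∀ᶠ x : ℝ in atTop, x ≠ 0 := (eventually_gt_atTop 0).mono fun x hx => ne_of_gt hx
  have h1 := ((isLittleO_one_iff ℝ).mpr hf).mul_isBigO hW'
  have h2 := ((isLittleO_one_iff ℝ).mpr hg).mul_isBigO (hW.mul (isBigO_refl (·⁻¹) atTop))
  refine (isLittleO_one_iff ℝ).mp ((h1.congr' .rfl (by simp)).sub (h2.congr' ?_ ?_))
  · filter_upwards [hpos] with x hx
    field_simp
  · filter_upwards [hpos] with x hx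
    field_simp

theorem tendsto_intervalIntegral_nhdsGT_atTop {E : Type*} [NormedAddCommGroup E]
    [NormedSpace ℝ E] {g : ℝ → E} {a : ℝ} (hg : IntegrableOn g (Ioi a)) :
    Tendsto (fun p : ℝ × ℝ => ∫ x in p.1..p.2, g x) (𝓝[>] a ×ˢ atTop)
      (𝓝 (∫ x in Ioi a, g x)) := by
  have hfst : Tendsto (fun p : ℝ × ℝ => p.1) (𝓝[>] a ×ˢ atTop) (𝓝 a) :=
    tendsto_fst.mono_right nhdsWithin_le_nhds
  have hcover := (aecover_Ioi_of_Ioi (μ := volume) hfst).inter (aecover_Iic tendsto_snd)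
  refine (hcover.integral_tendsto_of_countably_generated hg).congr' ?_
  filter_upwards [Eventually.prod_mk (Ioo_mem_nhdsGT (lt_add_one a)) (eventually_ge_atTop (a + 1))]
    with p ⟨hp₁, hp₂⟩
  rw [intervalIntegral.integral_of_le (hp₁.2.le.trans hp₂), Ioi_inter_Iic,
    Measure.restrict_restrict measurableSet_Ioc,
    inter_eq_left.mpr (Ioc_subset_Ioi_self.trans (Ioi_subset_Ioi hp₁.1.le))]

theorem integral_mul_deriv_deriv_eq {a b : ℝ} {f f' f'' W W' W'' : ℝ → ℝ}
    (hf : ∀ x ∈ uIcc a b, HasDerivAt f (f' x) x) (hf' : ∀ x ∈ uIcc a b, HasDerivAt f' (f'' x) x)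
    (hW : ∀ x ∈ uIcc a b, HasDerivAt W (W' x) x) (hW' : ∀ x ∈ uIcc a b, HasDerivAt W' (W'' x) x)
    (hf'' : IntervalIntegrable f'' volume a b) (hW'' : IntervalIntegrable W'' volume a b) :
    ∫ x in a..b, f x * W'' x =
      (f b * W' b - f' b * W b) - (f a * W' a - f' a * W a) + ∫ x in a..b, f'' x * W x := by
  rw [intervalIntegral.integral_mul_deriv_eq_deriv_mul hf hW'
      (HasDerivAt.continuousOn hf').intervalIntegrable hW'',
    intervalIntegral.integral_mul_deriv_eq_deriv_mul hf' hW hf''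
      (HasDerivAt.continuousOn hW').intervalIntegrable]
  ring

theorem setIntegral_mul_deriv_deriv_nonpos {f f' f'' W W' W'' : ℝ → ℝ}
    (hf : ∀ x > 0, HasDerivAt f (f' x) x) (hf' : ∀ x > 0, HasDerivAt f' (f'' x) x)
    (hW : ∀ x > 0, HasDerivAt W (W' x) x) (hW' : ∀ x > 0, HasDerivAt W' (W'' x) x)
    (hf''c : ContinuousOn f'' (Ioi 0)) (hW''c : ContinuousOn W'' (Ioi 0))
    (hf''_nonneg : ∀ x > 0, 0 ≤ f'' x) (hW_nonpos : ∀ x > 0, W x ≤ 0)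
    (h0 : Tendsto (fun x => f x * W' x - f' x * W x) (𝓝[>] 0) (𝓝 0))
    (hinf : Tendsto (fun x => f x * W' x - f' x * W x) atTop (𝓝 0))
    (hint : IntegrableOn (fun x => f x * W'' x) (Ioi 0)) :
    ∫ x in Ioi 0, f x * W'' x ≤ 0 := by
  set B := fun x => f x * W' x - f' x * W x
  have hIBP : ∀ ε T, 0 < ε → ε ≤ T → ∫ x in ε..T, f x * W'' x ≤ B T - B ε := by
    intro ε T hε hεT
    have hsub : uIcc ε T ⊆ Ioi 0 := by
      rw [uIcc_of_le hεT]; exact fun x hx => hε.trans_le hx.1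
    rw [integral_mul_deriv_deriv_eq (fun x hx => hf x (hsub hx)) (fun x hx => hf' x (hsub hx))
      (fun x hx => hW x (hsub hx)) (fun x hx => hW' x (hsub hx))
      ((hf''c.mono hsub).intervalIntegrable) ((hW''c.mono hsub).intervalIntegrable)]
    have : 0 ≤ ∫ x in ε..T, -(f'' x * W x) := intervalIntegral.integral_nonneg hεT fun x hx =>
      neg_nonneg.mpr (mul_nonpos_of_nonneg_of_nonpos (hf''_nonneg x (hε.trans_le hx.1))
        (hW_nonpos x (hε.trans_le hx.1)))
    rw [intervalIntegral.integral_neg] at this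
    linarith
  have hB : Tendsto (fun p : ℝ × ℝ => B p.2 - B p.1) (𝓝[>] 0 ×ˢ atTop) (𝓝 0) := by
    simpa using (hinf.comp tendsto_snd).sub (h0.comp tendsto_fst)
  refine le_of_tendsto_of_tendsto (tendsto_intervalIntegral_nhdsGT_atTop hint) hB ?_
  filter_upwards [Eventually.prod_mk (Ioo_mem_nhdsGT one_pos) (eventually_ge_atTop 1)]
    with p ⟨hp₁, hp₂⟩
  exact hIBP p.1 p.2 hp₁.1 (hp₁.2.le.trans hp₂)

theorem isBigO_inv_pow_of_pow_mul_abs_le {g : ℝ → ℝ} {C : ℝ} {k : ℕ}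
    (h : ∀ᶠ x in 𝓝[>] 0, x ^ k * |g x| ≤ C) : g =O[𝓝[>] 0] fun x => (x ^ k)⁻¹ := by
  refine .of_bound C ?_
  filter_upwards [h, eventually_mem_nhdsWithin] with x hx (hx0 : 0 < x)
  rw [Real.norm_eq_abs, norm_inv, norm_pow, Real.norm_eq_abs, abs_of_pos hx0, ← div_eq_mul_inv,
    le_div_iff₀ (by positivity), mul_comm]
  exact hx

theorem isBigO_one_of_abs_le {g : ℝ → ℝ} {M : ℝ} (h : ∀ x ≥ 0, |g x| ≤ M) :
    g =O[atTop] fun _ => (1:ℝ) :=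
  .of_bound M <| (eventually_ge_atTop 0).mono fun x hx => by simpa using h x hx

theorem isBigO_phi_comp_mul_sub_atTop (n : ℕ) {b : ℝ} (hb : 0 ≤ b) (c : ℝ) :
    (fun x => phi n (b * x) - c * (b * x)) =O[atTop] fun x => x :=
  ((isBigO_one_of_abs_le fun _ hx => abs_phi_le n (mul_nonneg hb hx)).trans
    (isLittleO_const_id_atTop 1).isBigO).sub
    ((isBigO_refl (fun x : ℝ => x) atTop).const_mul_left (c * b) |>.congr_left fun x => by ring)

theorem isBigO_phiD_comp_mul_sub_atTop (n : ℕ) {b : ℝ} (hb : 0 ≤ b) (c : ℝ) :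
    (fun x => b * (phiD n (b * x) - c)) =O[atTop] fun _ => (1:ℝ) :=
  ((isBigO_one_of_abs_le fun _ hx => abs_phiD_le n (mul_nonneg hb hx)).sub
    (isBigO_const_one ℝ c atTop)).const_mul_left b

theorem setIntegral_mul_phiDD_comp_mul_nonpos {n : ℕ} (hn : 2 ≤ n) {b : ℝ} (hb : 0 < b)
    {f : ℝ → ℝ} (hf : ContDiffOn ℝ 2 f (Ioi 0))
    (hf0 : f =O[𝓝[>] 0] (·⁻¹)) (hf'0 : deriv f =O[𝓝[>] 0] fun x => (x ^ 2)⁻¹)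
    (hfinf : Tendsto f atTop (𝓝 0)) (hf'inf : Tendsto (fun x => x * deriv f x) atTop (𝓝 0))
    (hconv : ∀ x > 0, 0 ≤ deriv (deriv f) x)
    (hint : IntegrableOn (fun x => f x * phiDD n (b * x)) (Ioi 0)) :
    ∫ x in Ioi 0, f x * phiDD n (b * x) ≤ 0 := by
  have hn0 : n ≠ 0 := by omega
  set c := 4 / (4 * (n : ℝ) ^ 2 - 1)
  set W := fun x => phi n (b * x) - c * (b * x)
  set W' := fun x => b * (phiD n (b * x) - c)
  set W'' := fun x => b ^ 2 * phiDD n (b * x)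
  have hlin : ∀ x, HasDerivAt (fun x => b * x) b x := fun x => by
    simpa using (hasDerivAt_id x).const_mul b
  have hW : ∀ x, HasDerivAt W (W' x) x := fun x =>
    (((hasDerivAt_phi _ _).comp x (hlin x)).sub ((hlin x).const_mul c)).congr_deriv (by ring)
  have hW' : ∀ x, HasDerivAt W' (W'' x) x := fun x =>
    ((((hasDerivAt_phiD _ _).comp x (hlin x)).sub_const c).const_mul b).congr_deriv (by ring)
  have hW''c : Continuous W'' := by
    have := continuous_phiDD n; fun_prop
  have hW''0 : W'' 0 = 0 := by
    simp [W'', phiDD_eq, phi_zero, hn0, show n - 1 ≠ 0 by omega]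
  obtain ⟨hW'o, hWo⟩ := isLittleO_of_deriv_deriv_tendsto_zero hW hW'
    (by simpa only [hW''0] using hW''c.tendsto 0) (by simp [W, phi_zero, hn0])
    (by simp [W', c, phiD_zero, hn0])
  have hf' : ContDiffOn ℝ 1 (deriv f) (Ioi 0) := hf.deriv_of_isOpen isOpen_Ioi (by norm_num)
  have key := setIntegral_mul_deriv_deriv_nonpos
    (fun x hx => (hf.differentiableOn two_ne_zero).hasDerivAt (isOpen_Ioi.mem_nhds hx))
    (fun x hx => (hf'.differentiableOn one_ne_zero).hasDerivAt (isOpen_Ioi.mem_nhds hx))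
    (fun x _ => hW x) (fun x _ => hW' x) (hf'.continuousOn_deriv_of_isOpen isOpen_Ioi le_rfl)
    hW''c.continuousOn hconv
    (fun x hx => sub_nonpos.mpr (phi_le hn0 (mul_nonneg hb.le hx.le)))
    (tendsto_mul_sub_mul_nhdsGT_zero hf0 hf'0 (hWo.mono nhdsWithin_le_nhds)
      (hW'o.mono nhdsWithin_le_nhds))
    (tendsto_mul_sub_mul_atTop hfinf hf'inf (isBigO_phi_comp_mul_sub_atTop n hb.le c)
      (isBigO_phiD_comp_mul_sub_atTop n hb.le c))
    (IntegrableOn.congr_fun (hint.const_mul (b ^ 2)) (fun x _ => by simp only [W'']; ring)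
      measurableSet_Ioi)
  simp only [W'', mul_left_comm (f _), integral_const_mul] at key
  exact nonpos_of_mul_nonpos_right key (by positivity)

theorem stmt_18_general (b : ℝ) (hb : 0 < b) (f : ℝ → ℝ)
    (hC2 : ContDiffOn ℝ 2 f (Set.Ioi 0))
    (hbd : ∃ C : ℝ, ∀ᶠ x in nhdsWithin 0 (Set.Ioi 0),
      x * |f x| ≤ C ∧ x^2 * |deriv f x| ≤ C)
    (htop : Tendsto f atTop (nhds 0))
    (htop' : Tendsto (fun x => x * deriv f x) atTop (nhds 0))
    (hconv : ∀ x > (0:ℝ), 0 ≤ deriv (deriv f) x)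
    (hint : ∀ n : ℕ, IntegrableOn (fun x => phi n (b * x) * f x) (Set.Ioi 0)) :
    ∀ n : ℕ, 2 ≤ n → 0 ≤ lamf b f (n + 1) + lamf b f (n - 1) - 2 * lamf b f n := by
  intro n hn
  obtain ⟨C, hC⟩ := hbd
  have hphiDD := phiDD_eq (show n ≠ 0 by omega)
  have hf0 : f =O[𝓝[>] 0] (·⁻¹) := by
    simpa using isBigO_inv_pow_of_pow_mul_abs_le (k := 1) (hC.mono fun x hx => by simpa using hx.1)
  have hlin : ∫ x in Ioi 0, f x * phiDD n (b * x) = 2 * (∫ x in Ioi 0, phi n (b * x) * f x) -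
      (∫ x in Ioi 0, phi (n + 1) (b * x) * f x) - ∫ x in Ioi 0, phi (n - 1) (b * x) * f x := by
    simp only [hphiDD, sub_mul, mul_comm (f _), mul_assoc]
    rw [integral_sub, integral_sub, integral_const_mul]
    · exact (hint n).const_mul 2
    · exact hint (n + 1)
    · exact ((hint n).const_mul 2).sub (hint (n + 1))
    · exact hint (n - 1)
  have hint' : IntegrableOn (fun x => f x * phiDD n (b * x)) (Ioi 0) :=
    IntegrableOn.congr_fun ((((hint n).const_mul 2).sub (hint (n + 1))).sub (hint (n - 1)))
      (fun x _ => by simp only [hphiDD, Pi.sub_apply]; ring) measurableSet_Ioi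
  have key := setIntegral_mul_phiDD_comp_mul_nonpos hn hb hC2 hf0
    (isBigO_inv_pow_of_pow_mul_abs_le (hC.mono fun x hx => hx.2)) htop htop' hconv hint'
  simp only [lamf]
  linarith

/-- Convexity of the spectrum for measures `dμ(x) = x f(x) dx` with `f` nonnegative,
`C²` and convex, under the stated boundary conditions. -/
theorem stmt_18 (b : ℝ) (hb : 0 < b) (f : ℝ → ℝ)
    (hC2 : ContDiffOn ℝ 2 f (Set.Ioi 0))
    (hpos : ∀ x > (0:ℝ), 0 ≤ f x)
    (hbd : ∃ C : ℝ, ∀ᶠ x in nhdsWithin 0 (Set.Ioi 0),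
      x * |f x| ≤ C ∧ x^2 * |deriv f x| ≤ C)
    (htop : Tendsto f atTop (nhds 0))
    (htop' : Tendsto (fun x => x * deriv f x) atTop (nhds 0))
    (hconv : ∀ x > (0:ℝ), 0 ≤ deriv (deriv f) x)
    (hint : ∀ n : ℕ, IntegrableOn (fun x => phi n (b * x) * f x) (Set.Ioi 0)) :
    ∀ n : ℕ, 2 ≤ n → 0 ≤ lamf b f (n + 1) + lamf b f (n - 1) - 2 * lamf b f n :=
  stmt_18_general b hb f hC2 hbd htop htop' hconv hint
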